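/- arXiv:1404.0950 — 6 statements merged into one kernel-verified Lean document; each statement's English description precedes it below -/
import Mathlib

section
/- Let (C,α,x) be an elusive triple in the Hamming graph H(m,q) where the code C has minimum distance δ = 3. Suppose that all pairs of (C,α,x)-associates π,π' with d(π,π') = 3 satisfy MC(π,π') = 3. Then q divides m. -/
/-! For a set `S` of vertices and a vertex `v` let `W_S(v) = ∑_{θ ∈ S} X ^ d(v, θ)`. Summing over
the unit sphere around `θ` turns `X ^ d(v, θ)` into `L (X ^ d(v, θ))`, where
`L f = (1 - X)(1 + (q - 1)X) f' + m(q - 1) X f` (`sphereOp m q`). As `δ = 3`, `C₁` is the disjoint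
union of the unit spheres around the codewords, so `W_{C₁} = L W_C`. The isometry `x` fixes `C₁`,
so `W_{C₁}(α) = W_{C₁}(αˣ)`, that is `L D = 0` for `D = W_C(α) - W_C(αˣ)`; and `D ≠ 0` since
`D(0) = 1`. Writing `D = (X - 1)^k U` with `U(1) ≠ 0`, the equation `L D = 0` divided by
`(X - 1)^k` reads `m (q - 1) U(1) = q k U(1)` at `X = 1`, so `m = q (m - k)`. -/

variable {M Q : Type*}

/-- The set of entries in which two vertices of the Hamming graph differ. -/
def diffSet [Fintype M] [DecidableEq Q] (α β : M → Q) : Finset M :=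
  Finset.univ.filter fun i => α i ≠ β i

/-- `GammaSet α r` is the set of vertices at Hamming distance exactly `r` from `α`. -/
def GammaSet [Fintype M] [DecidableEq Q] (α : M → Q) (r : ℕ) : Set (M → Q) :=
  {β | hammingDist α β = r}

/-- The neighbour set `C₁` of a code `C`. -/
def neighbourSet [Fintype M] [DecidableEq Q] (C : Set (M → Q)) : Set (M → Q) :=
  {ν | ν ∉ C ∧ ∃ c ∈ C, hammingDist ν c = 1}

/-- An automorphism of the Hamming graph: a bijection of vertices preserving Hamming distance. -/
def IsAut [Fintype M] [DecidableEq Q] (x : (M → Q) ≃ (M → Q)) : Prop :=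
  ∀ a b, hammingDist (x a) (x b) = hammingDist a b

/-- An elusive triple `(C, α, x)`. -/
def IsElusiveTriple [Fintype M] [DecidableEq Q] (C : Set (M → Q)) (α : M → Q)
    (x : (M → Q) ≃ (M → Q)) : Prop :=
  IsAut x ∧ x '' neighbourSet C = neighbourSet C ∧ α ∈ C ∧ x α ∉ C

/-- A `(C,α,x)`-associate: a vertex in `Γ₂(α) ∩ C^x`. -/
def IsAssociate [Fintype M] [DecidableEq Q] (C : Set (M → Q)) (α : M → Q)
    (x : (M → Q) ≃ (M → Q)) (π : M → Q) : Prop :=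
  π ∈ GammaSet α 2 ∧ π ∈ x '' C

/-- `MC C π π' = |C ∩ Γ₂(π) ∩ Γ₂(π')|`, the number of mutual codewords. -/
noncomputable def MC [Fintype M] [DecidableEq Q] (C : Set (M → Q)) (π π' : M → Q) : ℕ :=
  (C ∩ GammaSet π 2 ∩ GammaSet π' 2).ncard

/-- The code `C` has minimum distance `δ`. -/
def HasMinDist [Fintype M] [DecidableEq Q] (C : Set (M → Q)) (δ : ℕ) : Prop :=
  IsLeast {d : ℕ | ∃ a ∈ C, ∃ b ∈ C, a ≠ b ∧ hammingDist a b = d} δ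

/-- `IsCodeDist C β k` says that `d(β, C) = k`. -/
def IsCodeDist [Fintype M] [DecidableEq Q] (C : Set (M → Q)) (β : M → Q) (k : ℕ) : Prop :=
  IsLeast {d : ℕ | ∃ γ ∈ C, hammingDist β γ = d} k

/-- `update2 α i j a b` is the vertex `γ(α|i,j|a,b)`. -/
def update2 [DecidableEq M] (α : M → Q) (i j : M) (a b : Q) : M → Q :=
  Function.update (Function.update α i a) j b

/-- `update3 α i j k a b c` is the vertex `γ(α|i,j,k|a,b,c)`. -/
def update3 [DecidableEq M] (α : M → Q) (i j k : M) (a b c : Q) : M → Q :=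
  Function.update (Function.update (Function.update α i a) j b) k c

open Finset Polynomial Function

namespace Polynomial

theorem X_mul_derivative_X_pow {R : Type*} [CommSemiring R] (n : ℕ) :
    (X : R[X]) * derivative (X ^ n) = (n : R[X]) * X ^ n := by
  cases n with
  | zero => simp
  | succ n => rw [derivative_X_pow, map_natCast, Nat.add_sub_cancel]; ring

theorem X_sub_C_mul_derivative_pow_mul {R : Type*} [CommRing R] (r : R) (k : ℕ) (U : R[X]) :
    (X - C r) * derivative ((X - C r) ^ k * U)
      = (X - C r) ^ k * ((k : R[X]) * U + (X - C r) * derivative U) := by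
  rw [derivative_mul, derivative_X_sub_C_pow]
  cases k with
  | zero => simp
  | succ k => simp only [Nat.add_sub_cancel, map_natCast]; ring

theorem eq_mul_rootMultiplicity_one_of_derivative_eq {R : Type*} [CommRing R] [IsDomain R]
    {a b : R} {D : R[X]} (hD : D ≠ 0)
    (h : (1 - X) * (1 + C a * X) * derivative D + C b * X * D = 0) :
    b = (1 + a) * D.rootMultiplicity 1 := by
  obtain ⟨U, hDU, hU⟩ := D.exists_eq_pow_rootMultiplicity_mul_and_not_dvd hD 1
  set k := D.rootMultiplicity 1
  have hU1 : U.eval 1 ≠ 0 := fun hroot => hU (dvd_iff_isRoot.2 hroot)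
  have hfactor : (X - C 1) ^ k
      * (C b * X * U - (1 + C a * X) * ((k : R[X]) * U + (X - C 1) * derivative U)) = 0 := by
    have hder := X_sub_C_mul_derivative_pow_mul 1 k U
    rw [← hDU] at hder
    simp only [map_one] at hder hDU ⊢
    linear_combination h + (1 + C a * X) * hder - C b * X * hDU
  have hat1 := congrArg (eval 1)
    ((mul_eq_zero.1 hfactor).resolve_left (pow_ne_zero _ (X_sub_C_ne_zero 1)))
  simp only [eval_sub, eval_mul, eval_add, eval_C, eval_X, eval_one, eval_natCast, sub_self,
    zero_mul, add_zero, mul_one, eval_zero] at hat1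
  have : (b - (1 + a) * k) * U.eval 1 = 0 := by linear_combination hat1
  exact sub_eq_zero.1 ((mul_eq_zero.1 this).resolve_right hU1)

end Polynomial

namespace HammingGraph

noncomputable def sphereOp (m q : ℕ) : ℤ[X] →ₗ[ℤ] ℤ[X] :=
  LinearMap.mulLeft ℤ ((1 - X) * (1 + C ((q : ℤ) - 1) * X)) ∘ₗ derivative
    + LinearMap.mulLeft ℤ (C ((m : ℤ) * ((q : ℤ) - 1)) * X)

theorem sphereOp_apply (m q : ℕ) (f : ℤ[X]) :
    sphereOp m q f
      = (1 - X) * (1 + C ((q : ℤ) - 1) * X) * derivative f + C ((m : ℤ) * ((q : ℤ) - 1)) * X * f :=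
  rfl

section

variable [Fintype M] [DecidableEq Q]

noncomputable def distanceEnumerator (S : Finset (M → Q)) (v : M → Q) : ℤ[X] :=
  ∑ θ ∈ S, X ^ hammingDist v θ

theorem eval_zero_distanceEnumerator (S : Finset (M → Q)) (v : M → Q) :
    (distanceEnumerator S v).eval 0 = if v ∈ S then 1 else 0 := by
  simp only [distanceEnumerator, eval_finsetSum, eval_pow, eval_X, zero_pow_eq, hammingDist_eq_zero]
  exact sum_ite_eq S v fun _ => 1

theorem distanceEnumerator_apply_of_isAut {x : (M → Q) ≃ (M → Q)} (hx : IsAut x)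
    {T : Finset (M → Q)} (hT : x '' T = T) (v : M → Q) :
    distanceEnumerator T (x v) = distanceEnumerator T v := by
  have hmem : ∀ ν, ν ∈ T ↔ x ν ∈ T := fun ν => by
    conv_rhs => rw [← mem_coe, ← hT, x.injective.mem_set_image, mem_coe]
  exact (sum_equiv x hmem fun ν _ => by rw [hx]).symm

theorem sum_ite_eq_X_one (v θ : M → Q) :
    ∑ i, (if v i = θ i then X else 1 : ℤ[X])
      = (Fintype.card M : ℤ[X]) * X + (hammingDist v θ : ℤ[X]) * (1 - X) := by
  rw [hammingDist, card_filter, Nat.cast_sum, sum_mul, ← nsmul_eq_mul, ← card_univ, ← sum_const,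
    ← sum_add_distrib]
  exact sum_congr rfl fun i _ => by by_cases h : v i = θ i <;> simp [h]

variable [DecidableEq M]

theorem hammingDist_update (v θ : M → Q) (i : M) (b : Q) :
    hammingDist v (update θ i b)
      = hammingDist v (update θ i (v i)) + if v i = b then 0 else 1 := by
  have hsplit : ∀ c, hammingDist v (update θ i c)
      = (∑ j ∈ univ.erase i, if v j ≠ θ j then 1 else 0) + if v i ≠ c then 1 else 0 := by
    intro c
    rw [hammingDist, card_filter, ← add_sum_erase _ _ (mem_univ i), add_comm, update_self]
    congr 1
    exact sum_congr rfl fun j hj => by rw [update_of_ne (ne_of_mem_erase hj)]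
  rw [hsplit, hsplit]
  simp [ite_not]

theorem hammingDist_update_self {θ : M → Q} {i : M} {b : Q} (hb : b ≠ θ i) :
    hammingDist θ (update θ i b) = 1 := by
  rw [hammingDist_update, update_eq_self, hammingDist_self, if_neg hb.symm]

theorem exists_eq_update_of_hammingDist_eq_one {θ ν : M → Q} (h : hammingDist θ ν = 1) :
    ∃ i, ν i ≠ θ i ∧ ν = update θ i (ν i) := by
  obtain ⟨i, hi⟩ := card_eq_one.1 h
  have hdiff : ∀ j, θ j ≠ ν j ↔ j = i := fun j => by
    simpa using congrArg (j ∈ ·) hi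
  refine ⟨i, fun h => (hdiff i).2 rfl h.symm, funext fun j => ?_⟩
  rcases eq_or_ne j i with rfl | hj
  · rw [update_self]
  · rw [update_of_ne hj]
    exact (not_not.1 (mt (hdiff j).1 hj)).symm

variable [Fintype Q]

def unitSphere (θ : M → Q) : Finset (M → Q) :=
  univ.filter fun ν : M → Q => hammingDist θ ν = 1

theorem mem_unitSphere {θ ν : M → Q} : ν ∈ unitSphere θ ↔ hammingDist θ ν = 1 := by
  simp [unitSphere]

theorem sum_unitSphere_add {R : Type*} [AddCommMonoid R] (θ : M → Q) (f : (M → Q) → R) :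
    ∑ ν ∈ unitSphere θ, f ν + Fintype.card M • f θ = ∑ i, ∑ b, f (update θ i b) := by
  have hrow : ∀ i, ∑ b, f (update θ i b) = f θ + ∑ b ∈ univ.erase (θ i), f (update θ i b) :=
    fun i => by rw [← add_sum_erase _ _ (mem_univ (θ i)), update_eq_self]
  rw [sum_congr rfl fun i _ => hrow i, sum_add_distrib, sum_const, card_univ, add_comm,
    sum_sigma']
  congr 1
  refine (sum_bij (fun p _ => update θ p.1 p.2) ?_ ?_ ?_ fun _ _ => rfl).symm
  · rintro ⟨i, b⟩ hp
    exact mem_unitSphere.2 (hammingDist_update_self (ne_of_mem_erase (mem_sigma.1 hp).2))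
  · rintro ⟨i, b⟩ hp ⟨i', b'⟩ - hE
    have hb : b ≠ θ i := ne_of_mem_erase (mem_sigma.1 hp).2
    obtain rfl : i = i' := by
      by_contra hii
      exact hb (by simpa [update_of_ne hii] using congrFun hE i)
    simpa using congrFun hE i
  · intro ν hν
    obtain ⟨i, hne, hνi⟩ := exists_eq_update_of_hammingDist_eq_one (mem_unitSphere.1 hν)
    exact ⟨⟨i, ν i⟩, mem_sigma.2 ⟨mem_univ _, mem_erase.2 ⟨hne, mem_univ _⟩⟩, hνi.symm⟩

theorem sum_X_pow_hammingDist_update (v θ : M → Q) (i : M) :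
    ∑ b, (X : ℤ[X]) ^ hammingDist v (update θ i b)
      = X ^ hammingDist v (update θ i (v i)) * (1 + ((Fintype.card Q : ℤ[X]) - 1) * X) := by
  have hterm : ∀ b, (X : ℤ[X]) ^ (if v i = b then 0 else 1) = X + if v i = b then 1 - X else 0 :=
    fun b => by split_ifs <;> ring
  rw [sum_congr rfl fun b _ => by rw [hammingDist_update v θ i b, pow_add, hterm], ← mul_sum,
    sum_add_distrib, sum_ite_eq, if_pos (mem_univ _), sum_const, card_univ, nsmul_eq_mul]
  ring

theorem sum_unitSphere_X_pow_hammingDist (v θ : M → Q) :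
    ∑ ν ∈ unitSphere θ, (X : ℤ[X]) ^ hammingDist v ν
      = sphereOp (Fintype.card M) (Fintype.card Q) (X ^ hammingDist v θ) := by
  have hshift : ∀ i, X * X ^ hammingDist v (update θ i (v i))
      = (X : ℤ[X]) ^ hammingDist v θ * if v i = θ i then X else 1 := fun i => by
    have hs := hammingDist_update v θ i (θ i)
    rw [update_eq_self] at hs
    split_ifs with h
    · rw [h, update_eq_self]; ring
    · rw [hs, if_neg h]; ring
  have hrows : X * ∑ i, X ^ hammingDist v (update θ i (v i))
      = (X : ℤ[X]) ^ hammingDist v θ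
        * ((Fintype.card M : ℤ[X]) * X + (hammingDist v θ : ℤ[X]) * (1 - X)) := by
    rw [mul_sum, sum_congr rfl fun i _ => hshift i, ← mul_sum, sum_ite_eq_X_one]
  have hsum := sum_unitSphere_add θ fun ν => (X : ℤ[X]) ^ hammingDist v ν
  rw [sum_congr rfl fun i _ => sum_X_pow_hammingDist_update v θ i, ← sum_mul,
    nsmul_eq_mul] at hsum
  apply mul_left_cancel₀ (X_ne_zero : (X : ℤ[X]) ≠ 0)
  rw [sphereOp_apply]
  simp only [map_sub, map_mul, map_natCast, map_one]
  linear_combination X * hsum + (1 + ((Fintype.card Q : ℤ[X]) - 1) * X) * hrows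
    - (1 - X) * (1 + ((Fintype.card Q : ℤ[X]) - 1) * X)
      * X_mul_derivative_X_pow (R := ℤ) (hammingDist v θ)

theorem pairwiseDisjoint_unitSphere {S : Set (M → Q)} (hS : S.Pairwise (3 ≤ hammingDist · ·)) :
    S.PairwiseDisjoint unitSphere := by
  intro θ hθ θ' hθ' hne
  refine Finset.disjoint_left.2 fun ν hν hν' => ?_
  have := hammingDist_triangle θ ν θ'
  rw [hammingDist_comm ν θ', mem_unitSphere.1 hν, mem_unitSphere.1 hν'] at this
  exact absurd (hS hθ hθ' hne) (by omega)

theorem neighbourSet_eq_biUnion_unitSphere {S : Finset (M → Q)}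
    (hS : (S : Set (M → Q)).Pairwise (2 ≤ hammingDist · ·)) :
    neighbourSet (S : Set (M → Q)) = ↑(S.biUnion unitSphere) := by
  ext ν
  simp only [neighbourSet, Set.mem_ofPred_eq, coe_biUnion, Set.mem_iUnion, mem_coe,
    mem_unitSphere, exists_prop, hammingDist_comm ν]
  refine ⟨And.right, fun ⟨θ, hθ, hθν⟩ => ⟨fun hν => ?_, θ, hθ, hθν⟩⟩
  have := hS hθ hν fun h => by rw [h, hammingDist_self] at hθν; omega
  omega

theorem distanceEnumerator_biUnion_unitSphere {S : Finset (M → Q)}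
    (hS : (S : Set (M → Q)).Pairwise (3 ≤ hammingDist · ·)) (v : M → Q) :
    distanceEnumerator (S.biUnion unitSphere) v
      = sphereOp (Fintype.card M) (Fintype.card Q) (distanceEnumerator S v) := by
  rw [distanceEnumerator, sum_biUnion (pairwiseDisjoint_unitSphere hS), distanceEnumerator,
    map_sum]
  exact sum_congr rfl fun θ _ => sum_unitSphere_X_pow_hammingDist v θ

end

end HammingGraph

open HammingGraph

theorem stmt_0_general (m q : ℕ) (C : Set (Fin m → Fin q)) (α : Fin m → Fin q)
    (x : (Fin m → Fin q) ≃ (Fin m → Fin q))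
    (hET : IsElusiveTriple C α x) (hδ : HasMinDist C 3) :
    q ∣ m := by
  classical
  obtain ⟨hx, hxC₁, hα, hxα⟩ := hET
  set S := C.toFinset
  have hS : (S : Set (Fin m → Fin q)).Pairwise (3 ≤ hammingDist · ·) := by
    rw [Set.coe_toFinset]
    exact fun a ha b hb hab => hδ.2 ⟨a, ha, b, hb, hab, rfl⟩
  have hC₁ : neighbourSet C = ↑(S.biUnion unitSphere) := by
    rw [← neighbourSet_eq_biUnion_unitSphere (hS.mono' fun _ _ h => by omega), Set.coe_toFinset]
  set D := distanceEnumerator S α - distanceEnumerator S (x α)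
  have hLD : sphereOp m q D = 0 := by
    have hW := distanceEnumerator_biUnion_unitSphere hS
    simp only [Fintype.card_fin] at hW
    rw [map_sub, ← hW, ← hW, distanceEnumerator_apply_of_isAut hx (hC₁ ▸ hxC₁), sub_self]
  have hD : D ≠ 0 := fun hD0 => by
    simpa [D, S, eval_zero_distanceEnumerator, hα, hxα] using congrArg (Polynomial.eval 0) hD0
  have hmq := eq_mul_rootMultiplicity_one_of_derivative_eq hD hLD
  exact Int.natCast_dvd_natCast.1 ⟨m - D.rootMultiplicity 1, by linear_combination -hmq⟩

/-- If `(C,α,x)` is an elusive triple in `H(m,q)` with minimum distance 3 and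
every pair of associates at Hamming distance 3 has exactly 3 mutual codewords, then `q ∣ m`. -/
theorem stmt_0 (m q : ℕ) (C : Set (Fin m → Fin q)) (α : Fin m → Fin q)
    (x : (Fin m → Fin q) ≃ (Fin m → Fin q))
    (hET : IsElusiveTriple C α x) (hδ : HasMinDist C 3)
    (hMC : ∀ π π' : Fin m → Fin q, IsAssociate C α x π → IsAssociate C α x π' →
      hammingDist π π' = 3 → MC C π π' = 3) :
    q ∣ m :=
  stmt_0_general m q C α x hET hδ
end

section
/- Let (C,α,x) be an elusive triple in H(m,q) where the code C has minimum distance δ ≥ 3, and let π, π' be (C,α,x)-associates with d(π,π') = 4. Then 1 ≤ MC(π,π') ≤ 2. -/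
variable {M Q : Type*}

/-! A vertex at distance `2` from both `π` and `π'` lies on a geodesic between them, since
`d(π, π') = 4`; so at each coordinate it takes the value of `π` or of `π'`, and it is determined
by `S_γ = diffSet π γ`, a `2`-subset of the `4`-set `diffSet π π'`. For two such vertices
`d(α, β) ≤ 4 - 2 |S_α ∩ S_β|`, so a mutual codeword `β ≠ α`, being at distance `≥ δ ≥ 3` from
`α`, has `S_β` the complement of `S_α`. Hence `α` is a mutual codeword and there is at most one
other. -/

open Finset

section HammingInterval

variable [Fintype M] [DecidableEq Q] {u v v' w : M → Q}

lemma mem_diffSet {i : M} : i ∈ diffSet u v ↔ u i ≠ v i := by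
  simp [diffSet]

lemma card_diffSet : #(diffSet u v) = hammingDist u v := rfl

lemma diffSet_subset_union [DecidableEq M] (u v w : M → Q) :
    diffSet u w ⊆ diffSet u v ∪ diffSet v w := by
  intro i hi
  by_contra hc
  simp only [mem_union, mem_diffSet, not_or, not_not] at hi hc
  exact hi (hc.1.trans hc.2)

lemma eq_or_eq_of_hammingDist_add_eq (h : hammingDist u v + hammingDist v w = hammingDist u w)
    (i : M) : v i = u i ∨ v i = w i := by
  classical
  by_contra! hi
  have hinter : (diffSet u v ∩ diffSet v w).Nonempty :=
    ⟨i, mem_inter.2 ⟨mem_diffSet.2 hi.1.symm, mem_diffSet.2 hi.2⟩⟩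
  have hle : hammingDist u w ≤ #(diffSet u v ∪ diffSet v w) :=
    card_le_card (diffSet_subset_union u v w)
  have hsum : #(diffSet u v ∪ diffSet v w) + #(diffSet u v ∩ diffSet v w) =
      hammingDist u v + hammingDist v w := card_union_add_card_inter _ _
  have := hinter.card_pos
  omega

variable (hv : ∀ i, v i = u i ∨ v i = w i) (hv' : ∀ i, v' i = u i ∨ v' i = w i)
include hv

lemma diffSet_subset_of_forall_eq_or_eq : diffSet u v ⊆ diffSet u w := by
  intro i hi
  rw [mem_diffSet] at hi ⊢
  rcases hv i with h | h
  · exact absurd h.symm hi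
  · rwa [← h]

include hv'

lemma eq_of_diffSet_eq (h : diffSet u v = diffSet u v') : v = v' := by
  funext i
  have hi : u i ≠ v i ↔ u i ≠ v' i := by rw [← mem_diffSet, ← mem_diffSet, h]
  grind

variable [DecidableEq M]

lemma hammingDist_add_two_mul_card_inter_le :
    hammingDist v v' + 2 * #(diffSet u v ∩ diffSet u v') ≤ hammingDist u v + hammingDist u v' := by
  have hsub : diffSet v v' ⊆ (diffSet u v \ diffSet u v') ∪ (diffSet u v' \ diffSet u v) := by
    intro i hi
    simp only [mem_union, mem_sdiff, mem_diffSet] at hi ⊢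
    grind [hv i, hv' i]
  have hle : hammingDist v v' ≤ _ := (card_le_card hsub).trans (card_union_le _ _)
  have h₁ := card_sdiff_add_card_inter (diffSet u v) (diffSet u v')
  have h₂ := card_sdiff_add_card_inter (diffSet u v') (diffSet u v)
  rw [inter_comm] at h₂
  simp only [card_diffSet] at h₁ h₂
  omega

lemma diffSet_eq_sdiff_of_lt (hsum : hammingDist u v + hammingDist u v' = hammingDist u w)
    (hlt : hammingDist u w < hammingDist v v' + 2) :
    diffSet u v' = diffSet u w \ diffSet u v := by
  have hdisj : Disjoint (diffSet u v) (diffSet u v') := by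
    have := hammingDist_add_two_mul_card_inter_le hv hv'
    rw [disjoint_iff_inter_eq_empty, ← card_eq_zero]
    omega
  have hsub : diffSet u v' ⊆ diffSet u w \ diffSet u v :=
    subset_sdiff.2 ⟨diffSet_subset_of_forall_eq_or_eq hv', hdisj.symm⟩
  refine eq_of_subset_of_card_le hsub ?_
  rw [card_sdiff_of_subset (diffSet_subset_of_forall_eq_or_eq hv), card_diffSet, card_diffSet,
    card_diffSet]
  omega

end HammingInterval

lemma Set.ncard_le_two_of_subsingleton_sdiff {α : Type*} {s : Set α} {a : α}
    (h : (s \ {a}).Subsingleton) : s.ncard ≤ 2 :=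
  calc s.ncard ≤ (s \ {a}).ncard + ({a} : Set α).ncard := ncard_le_ncard_sdiff_add_ncard _ _
    _ ≤ 1 + 1 := by
      rw [ncard_singleton]
      exact Nat.add_le_add_right ((ncard_le_one h.finite).2 h) 1

section MutualCodewords

variable [Fintype M] [DecidableEq Q] {π π' α β β' : M → Q}

lemma eq_or_eq_of_mem_gammaSet_inter (hd : hammingDist π π' = 4)
    (hα : α ∈ GammaSet π 2 ∩ GammaSet π' 2) (i : M) : α i = π i ∨ α i = π' i :=
  eq_or_eq_of_hammingDist_add_eq (by rw [hα.1, hammingDist_comm, hα.2, hd]) i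

lemma eq_of_mem_gammaSet_inter_of_three_le [DecidableEq M] (hd : hammingDist π π' = 4)
    (hα : α ∈ GammaSet π 2 ∩ GammaSet π' 2) (hβ : β ∈ GammaSet π 2 ∩ GammaSet π' 2)
    (hβ' : β' ∈ GammaSet π 2 ∩ GammaSet π' 2)
    (hαβ : 3 ≤ hammingDist α β) (hαβ' : 3 ≤ hammingDist α β') : β = β' := by
  have hsum {γ} (hγ : γ ∈ GammaSet π 2 ∩ GammaSet π' 2) :
      hammingDist π α + hammingDist π γ = hammingDist π π' := by
    rw [hα.1, hγ.1, hd]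
  have hαgeo := eq_or_eq_of_mem_gammaSet_inter hd hα
  refine eq_of_diffSet_eq (eq_or_eq_of_mem_gammaSet_inter hd hβ)
    (eq_or_eq_of_mem_gammaSet_inter hd hβ') ?_
  rw [diffSet_eq_sdiff_of_lt hαgeo (eq_or_eq_of_mem_gammaSet_inter hd hβ) (hsum hβ) (by omega),
    diffSet_eq_sdiff_of_lt hαgeo (eq_or_eq_of_mem_gammaSet_inter hd hβ') (hsum hβ') (by omega)]

end MutualCodewords

/-- For an elusive triple with minimum distance `δ ≥ 3` and associates
`π, π'` with `d(π,π') = 4`, we have `1 ≤ MC(π,π') ≤ 2`. -/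
theorem stmt_5 (m q : ℕ) (C : Set (Fin m → Fin q)) (α : Fin m → Fin q)
    (x : (Fin m → Fin q) ≃ (Fin m → Fin q))
    (hET : IsElusiveTriple C α x) (hδ : ∃ δ : ℕ, 3 ≤ δ ∧ HasMinDist C δ)
    (π π' : Fin m → Fin q)
    (hπ : IsAssociate C α x π) (hπ' : IsAssociate C α x π')
    (hd : hammingDist π π' = 4) :
    1 ≤ MC C π π' ∧ MC C π π' ≤ 2 := by
  obtain ⟨-, -, hαC, -⟩ := hET
  obtain ⟨δ, hδ3, hδmin⟩ := hδ
  have hα : α ∈ GammaSet π 2 ∩ GammaSet π' 2 :=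
    ⟨(hammingDist_comm π α).trans hπ.1, (hammingDist_comm π' α).trans hπ'.1⟩
  have hfar {β} (hβC : β ∈ C) (hβα : β ≠ α) : 3 ≤ hammingDist α β :=
    hδ3.trans (hδmin.2 ⟨α, hαC, β, hβC, hβα.symm, rfl⟩)
  refine ⟨(Set.ncard_pos (Set.toFinite _)).2 ⟨α, ⟨hαC, hα.1⟩, hα.2⟩,
    Set.ncard_le_two_of_subsingleton_sdiff (a := α) ?_⟩
  rintro β ⟨⟨⟨hβC, hβπ⟩, hβπ'⟩, hβα⟩ β' ⟨⟨⟨hβ'C, hβ'π⟩, hβ'π'⟩, hβ'α⟩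
  exact eq_of_mem_gammaSet_inter_of_three_le hd hα ⟨hβπ, hβπ'⟩ ⟨hβ'π, hβ'π'⟩
    (hfar hβC hβα) (hfar hβ'C hβ'α)
end

section
/- Suppose (q,l) ∉ {(3,1), (2,2)} with q ≥ 2, l ≥ 1. Then the code C(S_q,l) in H(lq,q) is not elusive: every automorphism of H(lq,q) that fixes the neighbour set C(S_q,l)_1 setwise also fixes C(S_q,l) setwise; that is, Aut(C(S_q,l)_1) = Aut(C(S_q,l)). -/
variable {M Q : Type*}

/-- The permutation code `C(T)` in `H(q,q)`: vertices `α(g) = (1^g, …, q^g)` for `g ∈ T`. -/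
def permCode (q : ℕ) (T : Set (Equiv.Perm (Fin q))) : Set (Fin q → Fin q) :=
  {α | ∃ g ∈ T, α = ⇑g}

/-- The code `C(T,l)` in `H(lq,q)`, with entries indexed by `Q × L`: concatenations
`(α(g₁),…,α(g_l))` (entry `(i,j)` equal to `i^{g_j}`) whose product `g₁g₂⋯g_l` lies in `T`. -/
def permCodeL (q l : ℕ) (T : Set (Equiv.Perm (Fin q))) : Set (Fin q × Fin l → Fin q) :=
  {β | ∃ g : Fin l → Equiv.Perm (Fin q),
    (∀ i j, β (i, j) = g j i) ∧ (List.ofFn g).prod ∈ T}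

/-!
Measure the distance of a vertex from `C(S_q,l)` by its defect: the total number of symbols
missing from its columns. The code consists of the vertices of defect `0` and its neighbour set of
those of defect `1`, and changing one entry changes the defect by at most one. A vertex outside
`C₁` all of whose neighbours lie in `C₁` therefore has defect `0` or `2`; at defect `2` every
single change lowers the defect, which forces every column to be constant, so that the defect is
`l(q-1) = 2`. Outside the two excluded cases the code is thus recovered from `C₁` as the set of
vertices outside `C₁` enclosed by `C₁`, a description that every automorphism respects.
-/

open Finset Function

theorem hammingDist_eq_one_iff {ι β : Type*} [Fintype ι] [DecidableEq ι] [DecidableEq β]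
    {x y : ι → β} : hammingDist x y = 1 ↔ ∃ p a, a ≠ x p ∧ y = update x p a := by
  constructor
  · intro h
    obtain ⟨p, hp⟩ := card_eq_one.mp h
    have hdiff : ∀ i, x i ≠ y i ↔ i = p := fun i => by
      simpa using Finset.ext_iff.mp hp i
    refine ⟨p, y p, fun he => (hdiff p).mpr rfl he.symm, funext fun i => ?_⟩
    by_cases hi : i = p
    · subst hi; simp
    · rw [update_of_ne hi]
      exact (not_not.mp (mt (hdiff i).mp hi)).symm
  · rintro ⟨p, a, ha, rfl⟩
    refine card_eq_one.mpr ⟨p, Finset.ext fun i => ?_⟩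
    by_cases hi : i = p
    · subst hi; simpa using ha.symm
    · simp [hi]

def enclosedBy {M Q : Type*} [Fintype M] [DecidableEq Q] (N : Set (M → Q)) : Set (M → Q) :=
  {β | β ∉ N ∧ ∀ ν, hammingDist β ν = 1 → ν ∈ N}

namespace IsAut

variable {M Q : Type*} [Fintype M] [DecidableEq Q] {x : (M → Q) ≃ (M → Q)}

theorem hammingDist_symm_apply (hx : IsAut x) (a b : M → Q) :
    hammingDist (x.symm a) b = hammingDist a (x b) := by
  simpa using (hx (x.symm a) b).symm

theorem image_neighbourSet (hx : IsAut x) (C : Set (M → Q)) :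
    x '' neighbourSet C = neighbourSet (x '' C) := by
  ext γ
  simp only [neighbourSet, Set.mem_image_equiv, Set.mem_ofPred_eq, hx.hammingDist_symm_apply]
  refine and_congr_right fun _ => x.exists_congr fun c => by simp

theorem image_enclosedBy (hx : IsAut x) (N : Set (M → Q)) :
    x '' enclosedBy N = enclosedBy (x '' N) := by
  ext γ
  simp only [enclosedBy, Set.mem_image_equiv, Set.mem_ofPred_eq]
  refine and_congr_right fun _ => x.forall_congr fun ν => ?_
  rw [hx.hammingDist_symm_apply, Equiv.symm_apply_apply]

end IsAut

section ImageDefect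

variable {α : Type*} [Fintype α] [DecidableEq α] {f : α → α} {i : α} {a : α}

def imageDefect (f : α → α) : ℕ := Fintype.card α - #(univ.image f)

theorem imageDefect_eq_zero_iff : imageDefect f = 0 ↔ Injective f := by
  rw [imageDefect, Nat.sub_eq_zero_iff_le, (card_le_univ _).ge_iff_eq, ← card_univ,
    card_image_iff, coe_univ, Set.injOn_univ]

theorem image_subset_insert_image_update :
    univ.image f ⊆ insert (f i) (univ.image (update f i a)) := by
  intro b hb
  obtain ⟨j, -, rfl⟩ := mem_image.mp hb
  by_cases hj : j = i
  · subst hj; exact mem_insert_self _ _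
  · exact mem_insert_of_mem (mem_image.mpr ⟨j, mem_univ _, update_of_ne hj a f⟩)

theorem imageDefect_update_le : imageDefect (update f i a) ≤ imageDefect f + 1 := by
  have := (card_le_card (image_subset_insert_image_update (i := i) (a := a))).trans
    (card_insert_le (f i) _)
  have := card_le_univ (univ.image (update f i a))
  unfold imageDefect
  omega

theorem image_update_of_eq {i' : α} (hi' : i' ≠ i) (hf : f i' = f i) :
    univ.image (update f i a) = insert a (univ.image f) := by
  ext b
  simp only [mem_image, mem_univ, true_and, mem_insert]
  constructor
  · rintro ⟨j, rfl⟩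
    by_cases hj : j = i
    · subst hj; simp
    · exact Or.inr ⟨j, (update_of_ne hj a f).symm⟩
  · rintro (rfl | ⟨j, rfl⟩)
    · exact ⟨i, update_self i b f⟩
    · by_cases hj : j = i
      · exact ⟨i', by rw [update_of_ne hi', hf, hj]⟩
      · exact ⟨j, update_of_ne hj a f⟩

theorem imageDefect_update_of_injective (hf : Injective f) (ha : a ≠ f i) :
    imageDefect (update f i a) = 1 := by
  obtain ⟨i', rfl⟩ := (Finite.injective_iff_surjective.mp hf) a
  have hi' : i' ≠ i := fun h => ha (h ▸ rfl)
  have hnot : ¬ Injective (update f i (f i')) := fun h =>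
    hi' (h (by rw [update_of_ne hi', update_self]))
  have := imageDefect_update_le (f := f) (i := i) (a := f i')
  rw [imageDefect_eq_zero_iff.mpr hf] at this
  rw [← imageDefect_eq_zero_iff] at hnot
  omega

/-- Redirecting a repeated entry to a missing value lowers the defect by one. -/
theorem exists_imageDefect_update_add_one (hf : imageDefect f ≠ 0) :
    ∃ i a, a ≠ f i ∧ imageDefect (update f i a) + 1 = imageDefect f := by
  obtain ⟨i', i, hdup, hi'⟩ := not_injective_iff.mp (mt imageDefect_eq_zero_iff.mpr hf)
  obtain ⟨a, -, ha⟩ : ∃ a ∈ univ, a ∉ univ.image f := by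
    refine exists_of_ssubset (ssubset_of_subset_of_ne (subset_univ _) fun h => hf ?_)
    rw [imageDefect, h, card_univ, Nat.sub_self]
  refine ⟨i, a, fun h => ha (h ▸ mem_image_of_mem f (mem_univ i)), ?_⟩
  have hcard := card_le_univ (insert a (univ.image f))
  rw [card_insert_of_notMem ha] at hcard
  rw [imageDefect, imageDefect, image_update_of_eq hi' hdup, card_insert_of_notMem ha]
  omega

theorem imageDefect_eq_of_forall_update_lt
    (h : ∀ i a, a ≠ f i → imageDefect (update f i a) < imageDefect f) :
    imageDefect f = Fintype.card α - 1 := by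
  suffices hle : #(univ.image f) ≤ 1 by
    rcases isEmpty_or_nonempty α with _ | ⟨⟨i⟩⟩
    · simp [imageDefect]
    · have : 0 < #(univ.image f) := card_pos.mpr ⟨f i, mem_image_of_mem f (mem_univ i)⟩
      rw [imageDefect]
      omega
  by_contra! hlt
  by_cases hf : Injective f
  · obtain ⟨b, hb⟩ := card_pos.mp (zero_lt_one.trans hlt)
    obtain ⟨i, -, -⟩ := mem_image.mp hb
    obtain ⟨a, -, ha⟩ := exists_mem_ne hlt (f i)
    have := h i a ha
    rw [imageDefect_eq_zero_iff.mpr hf] at this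
    omega
  · obtain ⟨i', i, hdup, hi'⟩ := not_injective_iff.mp hf
    obtain ⟨a, ha, hne⟩ := exists_mem_ne hlt (f i)
    have := h i a hne
    rw [imageDefect, imageDefect, image_update_of_eq hi' hdup, insert_eq_of_mem ha] at this
    exact lt_irrefl _ this

end ImageDefect

section Defect

variable {α κ : Type*}

def column (β : α × κ → α) (j : κ) : α → α := fun i => β (i, j)

theorem column_update_self [DecidableEq α] [DecidableEq κ] (β : α × κ → α) (i : α) (j : κ)
    (a : α) : column (update β (i, j) a) j = update (column β j) i a := by
  funext i'
  by_cases hi : i' = i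
  · subst hi; simp [column]
  · simp [column, hi]

theorem column_update_of_ne [DecidableEq α] [DecidableEq κ] {β : α × κ → α} {j j' : κ}
    (hj : j' ≠ j) (i a : α) : column (update β (i, j) a) j' = column β j' := by
  funext i'
  simp [column, hj]

variable [Fintype α] [DecidableEq α] [Fintype κ] {β : α × κ → α}

def defect (β : α × κ → α) : ℕ := ∑ j, imageDefect (column β j)

theorem defect_eq_zero_iff : defect β = 0 ↔ ∀ j, imageDefect (column β j) = 0 := by
  simp [defect, sum_eq_zero_iff]

variable [DecidableEq κ]

theorem defect_update (β : α × κ → α) (i : α) (j : κ) (a : α) :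
    defect (update β (i, j) a) + imageDefect (column β j) =
      defect β + imageDefect (update (column β j) i a) := by
  rw [defect, defect, ← add_sum_erase univ _ (mem_univ j), ← add_sum_erase univ _ (mem_univ j),
    column_update_self,
    sum_congr rfl fun j' hj' => by rw [column_update_of_ne (ne_of_mem_erase hj')]]
  ring

theorem exists_update_defect_add_one (h : defect β ≠ 0) :
    ∃ p a, a ≠ β p ∧ defect (update β p a) + 1 = defect β := by
  obtain ⟨j, -, hj⟩ := exists_ne_zero_of_sum_ne_zero h
  obtain ⟨i, a, ha, hdec⟩ := exists_imageDefect_update_add_one hj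
  refine ⟨(i, j), a, ha, ?_⟩
  have := defect_update β i j a
  omega

theorem defect_update_of_defect_eq_zero (hβ : defect β = 0) {p : α × κ} {a : α} (ha : a ≠ β p) :
    defect (update β p a) = 1 := by
  obtain ⟨i, j⟩ := p
  have hcol := defect_eq_zero_iff.mp hβ j
  have := defect_update β i j a
  rw [hβ, hcol, imageDefect_update_of_injective (imageDefect_eq_zero_iff.mp hcol) ha] at this
  omega

theorem defect_eq_of_forall_update_lt (h : ∀ p a, a ≠ β p → defect (update β p a) < defect β) :
    defect β = Fintype.card κ * (Fintype.card α - 1) := by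
  have hcol : ∀ j, imageDefect (column β j) = Fintype.card α - 1 := fun j =>
    imageDefect_eq_of_forall_update_lt fun i a ha => by
      have := h (i, j) a ha
      have := defect_update β i j a
      omega
  simp [defect, hcol]

theorem neighbourSet_defect_eq_zero :
    neighbourSet {β : α × κ → α | defect β = 0} = {β | defect β = 1} := by
  ext ν
  constructor
  · rintro ⟨-, c, hc, hd⟩
    rw [hammingDist_comm] at hd
    obtain ⟨p, a, ha, rfl⟩ := hammingDist_eq_one_iff.mp hd
    exact defect_update_of_defect_eq_zero hc ha
  · intro (hν : defect ν = 1)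
    obtain ⟨p, a, ha, hdec⟩ := exists_update_defect_add_one (hν.trans_ne one_ne_zero)
    refine ⟨fun (h : defect ν = 0) => by omega, update ν p a, (by omega : defect _ = 0),
      hammingDist_eq_one_iff.mpr ⟨p, a, ha, rfl⟩⟩

theorem enclosedBy_defect_eq_one (h : Fintype.card κ * (Fintype.card α - 1) ≠ 2) :
    enclosedBy {β : α × κ → α | defect β = 1} = {β | defect β = 0} := by
  ext β
  constructor
  · rintro ⟨hβ, hnbr⟩
    have hnbr' : ∀ p a, a ≠ β p → defect (update β p a) = 1 := fun p a ha =>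
      hnbr _ (hammingDist_eq_one_iff.mpr ⟨p, a, ha, rfl⟩)
    by_contra h0
    obtain ⟨p, a, ha, hdec⟩ := exists_update_defect_add_one h0
    have h2 : defect β = 2 := by rw [hnbr' p a ha] at hdec; omega
    refine h ((defect_eq_of_forall_update_lt fun p' a' ha' => ?_).symm.trans h2)
    rw [hnbr' p' a' ha', h2]
    exact one_lt_two
  · intro (hβ : defect β = 0)
    refine ⟨fun (h : defect β = 1) => by omega, fun ν hν => ?_⟩
    obtain ⟨p, a, ha, rfl⟩ := hammingDist_eq_one_iff.mp hν
    exact defect_update_of_defect_eq_zero hβ ha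

end Defect

theorem permCodeL_univ_eq (q l : ℕ) :
    permCodeL q l Set.univ = {β : Fin q × Fin l → Fin q | defect β = 0} := by
  ext β
  simp only [permCodeL, Set.mem_univ, and_true, Set.mem_ofPred_eq, defect_eq_zero_iff,
    imageDefect_eq_zero_iff]
  constructor
  · rintro ⟨g, hg⟩ j
    have : column β j = g j := funext fun i => hg i j
    exact this ▸ (g j).injective
  · intro h
    exact ⟨fun j => Equiv.ofBijective _ (Finite.injective_iff_bijective.mp (h j)), fun _ _ => rfl⟩

theorem stmt_10_general (q l : ℕ)
    (h1 : (q, l) ≠ (3, 1)) (h2 : (q, l) ≠ (2, 2)) :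
    ∀ x : (Fin q × Fin l → Fin q) ≃ (Fin q × Fin l → Fin q), IsAut x →
      (x '' neighbourSet (permCodeL q l Set.univ) = neighbourSet (permCodeL q l Set.univ) ↔
        x '' permCodeL q l Set.univ = permCodeL q l Set.univ) := by
  intro x hx
  have hdefect : l * (q - 1) ≠ 2 := by
    simp only [ne_eq, Prod.mk.injEq] at h1 h2
    intro h
    have hl : l ≤ 2 := Nat.le_of_dvd two_pos ⟨_, h.symm⟩
    interval_cases l <;> omega
  have hC : enclosedBy (neighbourSet (permCodeL q l Set.univ)) = permCodeL q l Set.univ := by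
    rw [permCodeL_univ_eq, neighbourSet_defect_eq_zero, enclosedBy_defect_eq_one]
    rwa [Fintype.card_fin, Fintype.card_fin]
  constructor
  · intro hN
    rw [← hC, hx.image_enclosedBy, hN]
  · intro hCx
    rw [hx.image_neighbourSet, hCx]

/-- If `(q,l) ∉ {(3,1),(2,2)}`, the code `C(S_q,l)` is not elusive: an
automorphism of `H(lq,q)` fixes the neighbour set of `C(S_q,l)` setwise iff it fixes
`C(S_q,l)` setwise, i.e. `Aut(C(S_q,l)_1) = Aut(C(S_q,l))`. -/
theorem stmt_10 (q l : ℕ) (hq : 2 ≤ q) (hl : 1 ≤ l)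
    (h1 : (q, l) ≠ (3, 1)) (h2 : (q, l) ≠ (2, 2)) :
    ∀ x : (Fin q × Fin l → Fin q) ≃ (Fin q × Fin l → Fin q), IsAut x →
      (x '' neighbourSet (permCodeL q l Set.univ) = neighbourSet (permCodeL q l Set.univ) ↔
        x '' permCodeL q l Set.univ = permCodeL q l Set.univ) :=
  stmt_10_general q l h1 h2
end

section
/- Suppose (C,α,x) is an elusive triple in H(m,q) where the code C has minimum distance δ ≥ 3. Then m ≥ q. -/
/-!
Write `β = x α`. As `α ∈ C` and `x` permutes `C₁`, `β ∉ C ∪ C₁`; as `δ ≥ 2`, every neighbour of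
`α` lies in `C₁`, hence so does every neighbour of `β`. Fix a coordinate `i`. For a symbol
`a ≠ β i`, the neighbour of `β` with entry `a` at `i` is adjacent to a codeword, which differs from
it at some `p_a ≠ i` (otherwise `β` would be within distance 1 of `C`); this codeword is
`γ(β|i,p_a|a,b)`. Two such codewords with the same `p_a` are within distance 2, hence equal since
`δ ≥ 3`, so `a ↦ p_a` injects the `q - 1` symbols other than `β i` into the `m - 1` coordinates
other than `i`.
-/

variable {M Q : Type*}

open Function

section Hamming

variable [Fintype M] [DecidableEq Q]

theorem hammingDist_le_card_of_eqOn_compl {f g : M → Q} {s : Finset M}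
    (h : ∀ k ∉ s, f k = g k) : hammingDist f g ≤ s.card :=
  Finset.card_le_card fun k hk => by
    by_contra hks
    exact (Finset.mem_filter.mp hk).2 (h k hks)

variable [DecidableEq M]

theorem hammingDist_update_le (f : M → Q) (i : M) (a : Q) : hammingDist f (update f i a) ≤ 1 :=
  (hammingDist_le_card_of_eqOn_compl (s := {i}) fun _ hk =>
    (update_of_ne (Finset.notMem_singleton.mp hk) _ _).symm).trans_eq (Finset.card_singleton i)

theorem hammingDist_update_of_ne {f : M → Q} {i : M} {a : Q} (ha : a ≠ f i) :
    hammingDist f (update f i a) = 1 := by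
  refine le_antisymm (hammingDist_update_le f i a) (hammingDist_pos.mpr fun h => ha ?_)
  rw [h, update_self]

theorem hammingDist_update2_le (f : M → Q) (i j : M) (a b a' b' : Q) :
    hammingDist (update2 f i j a b) (update2 f i j a' b') ≤ 2 := by
  refine (hammingDist_le_card_of_eqOn_compl (s := {i, j}) fun k hk => ?_).trans
    Finset.card_le_two
  simp only [Finset.mem_insert, Finset.mem_singleton, not_or] at hk
  simp only [update2, update_of_ne hk.1, update_of_ne hk.2]

theorem exists_eq_update_of_hammingDist_eq_one {f g : M → Q} (h : hammingDist f g = 1) :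
    ∃ p, g = update f p (g p) := by
  obtain ⟨p, hp⟩ := Finset.card_eq_one.mp h
  refine ⟨p, funext fun k => ?_⟩
  by_cases hkp : k = p
  · rw [hkp, update_self]
  · rw [update_of_ne hkp]
    by_contra hne
    have : k ∈ ({p} : Finset M) := hp ▸ Finset.mem_filter.mpr ⟨Finset.mem_univ k, Ne.symm hne⟩
    exact hkp (Finset.mem_singleton.mp this)

end Hamming

section Code

variable [Fintype M] [DecidableEq Q] {C : Set (M → Q)} {δ : ℕ}

theorem HasMinDist.le_hammingDist (hmin : HasMinDist C δ) {c c' : M → Q} (hc : c ∈ C)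
    (hc' : c' ∈ C) (hne : c ≠ c') : δ ≤ hammingDist c c' :=
  hmin.2 ⟨c, hc, c', hc', hne, rfl⟩

theorem mem_neighbourSet_of_hammingDist_eq_one (hmin : HasMinDist C δ) (hδ : 2 ≤ δ)
    {c ν : M → Q} (hc : c ∈ C) (h : hammingDist ν c = 1) : ν ∈ neighbourSet C := by
  refine ⟨fun hν => ?_, c, hc, h⟩
  have := hmin.le_hammingDist hν hc (hammingDist_pos.mp (by omega))
  omega

variable [DecidableEq M]

theorem exists_update2_mem_of_update_mem_neighbourSet {β : M → Q} (hβC : β ∉ C)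
    (hβC₁ : β ∉ neighbourSet C) {i : M} {a : Q} (hν : update β i a ∈ neighbourSet C) :
    ∃ p ≠ i, ∃ b, update2 β i p a b ∈ C := by
  obtain ⟨-, c, hc, hd⟩ := hν
  obtain ⟨p, hcp⟩ := exists_eq_update_of_hammingDist_eq_one hd
  refine ⟨p, ?_, c p, by rw [update2, ← hcp]; exact hc⟩
  rintro rfl
  rw [update_idem] at hcp
  have hle : hammingDist β c ≤ 1 := by
    rw [hcp]
    exact hammingDist_update_le β p (c p)
  interval_cases hd' : hammingDist β c
  · exact hβC (hammingDist_eq_zero.mp hd' ▸ hc)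
  · exact hβC₁ ⟨hβC, c, hc, hd'⟩

theorem eq_of_update2_mem (hmin : HasMinDist C δ) (hδ : 3 ≤ δ) {β : M → Q} {i p : M}
    (hip : i ≠ p) {a a' b b' : Q} (h : update2 β i p a b ∈ C) (h' : update2 β i p a' b' ∈ C) :
    a = a' := by
  by_contra hne
  have hval : ∀ a b, update2 β i p a b i = a := fun a b => by
    rw [update2, update_of_ne hip, update_self]
  have := hmin.le_hammingDist h h' fun heq => hne (by rw [← hval a b, heq, hval])
  have := hammingDist_update2_le β i p a b a' b'
  omega

end Code

section Elusive

variable [Fintype M] [DecidableEq Q] {C : Set (M → Q)} {α : M → Q}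
  {x : (M → Q) ≃ (M → Q)}

theorem IsElusiveTriple.apply_notMem_neighbourSet (h : IsElusiveTriple C α x) :
    x α ∉ neighbourSet C := by
  obtain ⟨-, hC₁, hα, -⟩ := h
  rw [← hC₁, x.injective.mem_set_image]
  exact fun hα₁ => hα₁.1 hα

theorem IsElusiveTriple.mem_neighbourSet (h : IsElusiveTriple C α x) {δ : ℕ}
    (hmin : HasMinDist C δ) (hδ : 2 ≤ δ) {ν : M → Q} (hν : hammingDist (x α) ν = 1) :
    ν ∈ neighbourSet C := by
  obtain ⟨hx, hC₁, hα, -⟩ := h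
  have hμ : x.symm ν ∈ neighbourSet C := by
    refine mem_neighbourSet_of_hammingDist_eq_one hmin hδ hα ?_
    rw [← hx, x.apply_symm_apply, hammingDist_comm, hν]
  rw [← hC₁]
  exact ⟨_, hμ, x.apply_symm_apply ν⟩

theorem IsElusiveTriple.card_le_card [DecidableEq M] [Fintype Q] (h : IsElusiveTriple C α x)
    {δ : ℕ} (hmin : HasMinDist C δ) (hδ : 3 ≤ δ) : Fintype.card Q ≤ Fintype.card M := by
  obtain ⟨i⟩ : Nonempty M :=
    not_isEmpty_iff.mp fun _ => h.2.2.2 (Subsingleton.elim α (x α) ▸ h.2.2.1)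
  set β := x α
  have exists_codeword (a : {a // a ≠ β i}) :
      ∃ p : {p // p ≠ i}, ∃ b, update2 β i p a b ∈ C := by
    obtain ⟨p, hp, hb⟩ := exists_update2_mem_of_update_mem_neighbourSet h.2.2.2
      h.apply_notMem_neighbourSet
      (h.mem_neighbourSet hmin (by omega) (hammingDist_update_of_ne a.2))
    exact ⟨⟨p, hp⟩, hb⟩
  choose p b hpb using exists_codeword
  have hinj : Injective p := fun a a' hpa => Subtype.ext <|
    eq_of_update2_mem hmin hδ (p a).2.symm (hpb a) (hpa ▸ hpb a')
  have := Fintype.card_le_of_injective p hinj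
  simp only [Fintype.card_subtype_compl, Fintype.card_subtype_eq] at this
  have := Fintype.card_pos_iff.mpr ⟨i⟩
  omega

end Elusive

/-- If `(C,α,x)` is an elusive triple in `H(m,q)` with minimum distance
`δ ≥ 3`, then `m ≥ q`. -/
theorem stmt_13 (m q : ℕ) (C : Set (Fin m → Fin q)) (α : Fin m → Fin q)
    (x : (Fin m → Fin q) ≃ (Fin m → Fin q))
    (hET : IsElusiveTriple C α x) (hδ : ∃ δ : ℕ, 3 ≤ δ ∧ HasMinDist C δ) :
    q ≤ m := by
  obtain ⟨δ, hδ3, hmin⟩ := hδ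
  simpa using hET.card_le_card hmin hδ3
end

section
/- The code RM_q(s−1,d) has covering radius ρ = 2 and minimum distance δ = 4 if q = 2 and δ = 3 if q ≥ 3. Furthermore its neighbour set coincides with that of RM_q(s,d): RM_q(s−1,d)_1 = RM_q(s,d)_1. -/
variable {M Q : Type*}

/-- The Reed–Muller code `RM_q(s,d)` (with `s = (q-1)d - 1`): the dual of the repetition
code, i.e. all vertices of `H(q^d, q)` whose entries sum to zero. -/
def RMs (F : Type*) [Field F] [Fintype F] (d : ℕ) : Set ((Fin d → F) → F) :=
  {α | ∑ v : Fin d → F, α v = 0}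

/-- The Reed–Muller code `RM_q(s-1,d)` (with `s = (q-1)d - 1`): the members `α` of
`RM_q(s,d)` which additionally satisfy `∑_{v ∈ M} α_v • v = 0`. -/
def RMs1 (F : Type*) [Field F] [Fintype F] (d : ℕ) : Set ((Fin d → F) → F) :=
  {α | ∑ v : Fin d → F, α v = 0 ∧ ∑ v : Fin d → F, α v • v = 0}

/-!
`RM_q(s-1,d)` is the kernel of the linear map `α ↦ (∑ α_v, ∑ α_v • v)`, so distances in it are
weights of its nonzero words. A word of weight 1 has nonzero entry sum; one supported on `{u, w}`
has `α_w = -α_u` and then `α_u • (u - w) = 0`; over `F_2` one of weight 3 has entry sum `3 = 1`.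
Words supported on `{0, u, c • u}` (`c ∉ {0, 1}`) and on `{0, e₁, e₂, e₁ + e₂}` (over `F_2`)
attain these bounds.

A vertex `β` with `∑ β_v = s ≠ 0` is repaired into the code by lowering the single entry at
`s⁻¹ • ∑ β_v • v` by `s`; if `s = 0`, subtracting `e_t - e_0` with `t = ∑ β_v • v` repairs it in
two entries. Hence both codes have as neighbours exactly the vertices of nonzero entry sum, and
`e_u - e_0` (`u ≠ 0`) lies at distance exactly 2 from `RM_q(s-1,d)`.
-/

open Finset

section Hamming

variable {ι β : Type*} [Fintype ι] [DecidableEq β]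

lemma hammingNorm_le_card_of_support_subset [Zero β] {x : ι → β} {s : Finset ι}
    (h : ∀ i, x i ≠ 0 → i ∈ s) : hammingNorm x ≤ #s :=
  card_le_card fun i hi => h i (mem_filter.1 hi).2

lemma hammingNorm_pi_single [DecidableEq ι] [Zero β] (i : ι) {a : β} (ha : a ≠ 0) :
    hammingNorm (Pi.single i a : ι → β) = 1 := by
  refine le_antisymm ((hammingNorm_le_card_of_support_subset (s := {i}) fun j hj => ?_).trans_eq
    (card_singleton i)) (hammingNorm_pos_iff.2 (by simpa using ha))
  by_contra hji
  exact hj (by simp [show j ≠ i by simpa using hji])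

lemma sum_ne_zero_of_hammingNorm_eq_one [AddCommMonoid β] {x : ι → β} (h : hammingNorm x = 1) :
    ∑ i, x i ≠ 0 := by
  obtain ⟨i, hi⟩ := card_eq_one.1 h
  have hsupp : ∀ j, x j ≠ 0 ↔ j = i := fun j => by simpa using congrArg (j ∈ ·) hi
  rw [sum_eq_single i (fun j _ hj => not_not.1 (mt (hsupp j).1 hj)) (by simp)]
  exact (hsupp i).2 rfl

lemma hammingDist_sub_right_eq [AddGroup β] (x y : ι → β) :
    hammingDist x (x - y) = hammingNorm y := by
  simp only [hammingDist, hammingNorm, Pi.sub_apply, ne_eq, eq_sub_iff_add_eq, add_eq_left]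

lemma sum_ne_sum_of_hammingDist_eq_one [AddCommGroup β] {x y : ι → β}
    (h : hammingDist x y = 1) : ∑ i, x i ≠ ∑ i, y i := by
  rw [hammingDist_eq_hammingNorm] at h
  simpa [sum_add_distrib, neg_add_eq_zero] using sum_ne_zero_of_hammingNorm_eq_one h

lemma hasMinDist_of_le_hammingNorm [AddCommGroup β] (C : AddSubgroup (ι → β)) {δ : ℕ}
    (hle : ∀ α ∈ C, α ≠ 0 → δ ≤ hammingNorm α) {α : ι → β} (hα : α ∈ C) (hα0 : α ≠ 0)
    (hδ : hammingNorm α ≤ δ) : HasMinDist (C : Set (ι → β)) δ := by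
  refine ⟨⟨α, hα, 0, C.zero_mem, hα0, ?_⟩, ?_⟩
  · rw [hammingDist_zero_right]
    exact le_antisymm hδ (hle α hα hα0)
  · rintro _ ⟨a, ha, b, hb, hab, rfl⟩
    rw [← sub_sub_cancel a b, hammingDist_sub_right_eq]
    exact hle _ (C.sub_mem ha hb) (sub_ne_zero.2 hab)

end Hamming

section MomentCode

variable (F V : Type*) [Field F] [Fintype V] [AddCommGroup V] [Module F V]

def moments : (V → F) →ₗ[F] F × V where
  toFun α := (∑ v, α v, ∑ v, α v • v)
  map_add' α β := by simp [sum_add_distrib, add_smul]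
  map_smul' c α := by simp [mul_sum, smul_sum, smul_smul]

def momentCode : Submodule F (V → F) :=
  LinearMap.ker (moments F V)

variable {F V}

lemma moments_apply (α : V → F) : moments F V α = (∑ v, α v, ∑ v, α v • v) := rfl

lemma moments_pi_single [DecidableEq V] (u : V) (a : F) :
    moments F V (Pi.single u a) = (a, a • u) := by
  simp [moments_apply, Pi.single_apply]

lemma mem_momentCode {α : V → F} :
    α ∈ momentCode F V ↔ ∑ v, α v = 0 ∧ ∑ v, α v • v = 0 := by
  simp [momentCode, moments_apply, Prod.ext_iff]

lemma sum_eq_zero_of_mem_momentCode {α : V → F} (hα : α ∈ momentCode F V) : ∑ v, α v = 0 :=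
  (mem_momentCode.1 hα).1

lemma RMs1_eq_momentCode (F : Type*) [Field F] [Fintype F] (d : ℕ) :
    RMs1 F d = momentCode F (Fin d → F) :=
  Set.ext fun _ => mem_momentCode.symm

variable [DecidableEq F] [DecidableEq V]

lemma exists_hammingNorm_le_two_moments_eq (u : V) :
    ∃ δ : V → F, hammingNorm δ ≤ 2 ∧ moments F V δ = (0, u) := by
  refine ⟨Pi.single u 1 - Pi.single 0 1, ?_, by simp [moments_pi_single]⟩
  refine (hammingNorm_le_card_of_support_subset (s := {u, 0}) fun v hv => ?_).trans card_le_two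
  by_contra hmem
  simp only [mem_insert, mem_singleton, not_or] at hmem
  simp [hmem.1, hmem.2] at hv

lemma exists_mem_momentCode_hammingDist_eq_one {β : V → F} (hβ : ∑ v, β v ≠ 0) :
    ∃ γ ∈ momentCode F V, hammingDist β γ = 1 := by
  refine ⟨β - Pi.single ((∑ v, β v)⁻¹ • ∑ v, β v • v) (∑ v, β v), ?_, ?_⟩
  · rw [momentCode, LinearMap.mem_ker, map_sub, moments_pi_single, moments_apply]
    simp [smul_smul, hβ]
  · rw [hammingDist_sub_right_eq, hammingNorm_pi_single _ hβ]

lemma exists_mem_momentCode_hammingDist_le_two (β : V → F) :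
    ∃ γ ∈ momentCode F V, hammingDist β γ ≤ 2 := by
  by_cases hβ : ∑ v, β v = 0
  · obtain ⟨δ, hδ2, hδ⟩ := exists_hammingNorm_le_two_moments_eq (F := F) (∑ v, β v • v)
    refine ⟨β - δ, ?_, by rwa [hammingDist_sub_right_eq]⟩
    rw [momentCode, LinearMap.mem_ker, map_sub, hδ, moments_apply, hβ, sub_self]
  · obtain ⟨γ, hγ, h1⟩ := exists_mem_momentCode_hammingDist_eq_one hβ
    exact ⟨γ, hγ, h1.trans_le one_le_two⟩

lemma exists_isCodeDist_momentCode_two [Nontrivial V] :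
    ∃ β : V → F, IsCodeDist (momentCode F V : Set (V → F)) β 2 := by
  obtain ⟨u, hu⟩ := exists_ne (0 : V)
  obtain ⟨β, hβ2, hβ⟩ := exists_hammingNorm_le_two_moments_eq (F := F) u
  have hfar : ∀ γ ∈ momentCode F V, 2 ≤ hammingDist β γ := by
    intro γ hγ
    have hne : β ≠ γ := by
      rintro rfl
      exact hu (congrArg Prod.snd (hβ.symm.trans hγ))
    have h1 : hammingDist β γ ≠ 1 := fun h =>
      sum_ne_sum_of_hammingDist_eq_one h
        ((congrArg Prod.fst hβ).trans (sum_eq_zero_of_mem_momentCode hγ).symm)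
    have := hammingDist_pos.2 hne
    omega
  refine ⟨β, ⟨0, zero_mem _, ?_⟩, fun k ⟨γ, hγ, hk⟩ => hk ▸ hfar γ hγ⟩
  exact le_antisymm (by rwa [hammingDist_zero_right]) (hfar 0 (zero_mem _))

theorem isGreatest_codeDist_momentCode [Nontrivial V] :
    IsGreatest {k | ∃ β : V → F, IsCodeDist (momentCode F V : Set (V → F)) β k} 2 := by
  refine ⟨exists_isCodeDist_momentCode_two, ?_⟩
  rintro k ⟨β, hk⟩
  obtain ⟨γ, hγ, h2⟩ := exists_mem_momentCode_hammingDist_le_two β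
  exact (hk.2 ⟨γ, hγ, rfl⟩).trans h2

theorem neighbourSet_momentCode :
    neighbourSet (momentCode F V : Set (V → F)) = neighbourSet {α : V → F | ∑ v, α v = 0} := by
  ext ν
  constructor
  · rintro ⟨-, γ, hγ, h1⟩
    have hγ0 := sum_eq_zero_of_mem_momentCode hγ
    exact ⟨hγ0 ▸ sum_ne_sum_of_hammingDist_eq_one h1, γ, hγ0, h1⟩
  · rintro ⟨hν, -⟩
    obtain ⟨γ, hγ, h1⟩ := exists_mem_momentCode_hammingDist_eq_one hν
    exact ⟨fun h => hν (sum_eq_zero_of_mem_momentCode h), γ, hγ, h1⟩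

lemma three_le_hammingNorm_of_mem_momentCode {α : V → F} (hα : α ∈ momentCode F V)
    (h0 : α ≠ 0) : 3 ≤ hammingNorm α := by
  obtain ⟨hS, hT⟩ := mem_momentCode.1 hα
  have hpos := hammingNorm_pos_iff.2 h0
  by_contra! hlt
  obtain h1 | h2 : hammingNorm α = 1 ∨ hammingNorm α = 2 := by omega
  · exact sum_ne_zero_of_hammingNorm_eq_one h1 hS
  · obtain ⟨u, w, huw, hsupp⟩ := card_eq_two.1 h2
    have hu : α u ≠ 0 := by simpa using congrArg (u ∈ ·) hsupp
    have hS' : ∑ v ∈ {u, w}, α v = 0 := by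
      rwa [← hsupp, sum_filter_ne_zero]
    have hT' : ∑ v ∈ {u, w}, α v • v = 0 := by
      rwa [← hsupp, sum_filter_of_ne fun v _ h => left_ne_zero_of_smul h]
    rw [sum_pair huw] at hS' hT'
    rw [eq_neg_of_add_eq_zero_right hS', neg_smul, ← sub_eq_add_neg, ← smul_sub] at hT'
    exact huw (sub_eq_zero.1 ((smul_eq_zero.1 hT').resolve_left hu))

lemma four_le_hammingNorm_of_mem_momentCode [Fintype F] (hF : Fintype.card F = 2) {α : V → F}
    (hα : α ∈ momentCode F V) (h0 : α ≠ 0) : 4 ≤ hammingNorm α := by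
  have h3 := three_le_hammingNorm_of_mem_momentCode hα h0
  suffices hammingNorm α ≠ 3 by omega
  intro hw
  have hone : ∀ v ∈ univ.filter (α · ≠ 0), α v = 1 := fun v hv => by
    simpa [hF] using FiniteField.pow_card_sub_one_eq_one (α v) (mem_filter.1 hv).2
  have hsum : ∑ v, α v = 3 := by
    have hw' : #{v | α v ≠ 0} = 3 := hw
    rw [← sum_filter_ne_zero, sum_congr rfl hone, sum_const, nsmul_one, hw']
    norm_num
  have h2 : (2 : F) = 0 := by exact_mod_cast hF ▸ FiniteField.cast_card_eq_zero F
  have h3 : (3 : F) = 0 := hsum.symm.trans (sum_eq_zero_of_mem_momentCode hα)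
  exact one_ne_zero (by linear_combination h3 - h2)

lemma hasMinDist_momentCode_three [Fintype F] (hF : 3 ≤ Fintype.card F) [Nontrivial V] :
    HasMinDist (momentCode F V : Set (V → F)) 3 := by
  obtain ⟨c, -, hc⟩ := exists_mem_notMem_of_card_lt_card
    (s := ({0, 1} : Finset F)) (t := univ) (card_le_two.trans_lt hF)
  simp only [mem_insert, mem_singleton, not_or] at hc
  obtain ⟨u, hu⟩ := exists_ne (0 : V)
  have hcu : c • u ≠ 0 := smul_ne_zero hc.1 hu
  refine hasMinDist_of_le_hammingNorm (momentCode F V).toAddSubgroup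
    (fun α hα h0 => three_le_hammingNorm_of_mem_momentCode hα h0)
    (α := Pi.single (c • u) 1 - Pi.single u c + Pi.single 0 (c - 1)) ?_ ?_ ?_
  · rw [Submodule.mem_toAddSubgroup, momentCode, LinearMap.mem_ker]
    simp [moments_pi_single, Prod.ext_iff]
  · intro h
    have h0 := congrFun h 0
    simp [hcu.symm, hu.symm, sub_eq_zero, hc.2] at h0
  · refine (hammingNorm_le_card_of_support_subset (s := {c • u, u, 0}) fun v hv => ?_).trans
      card_le_three
    by_contra hmem
    simp only [mem_insert, mem_singleton, not_or] at hmem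
    simp [hmem.1, hmem.2.1, hmem.2.2] at hv

lemma hasMinDist_momentCode_four [Fintype F] (hF : Fintype.card F = 2) {e₁ e₂ : V} (h₁ : e₁ ≠ 0)
    (h₂ : e₂ ≠ 0) (h₁₂ : e₁ ≠ e₂) : HasMinDist (momentCode F V : Set (V → F)) 4 := by
  have h2 : (2 : F) = 0 := by exact_mod_cast hF ▸ FiniteField.cast_card_eq_zero F
  refine hasMinDist_of_le_hammingNorm (momentCode F V).toAddSubgroup
    (fun α hα h0 => four_le_hammingNorm_of_mem_momentCode hF hα h0)
    (α := Pi.single 0 1 + Pi.single e₁ 1 + Pi.single e₂ 1 + Pi.single (e₁ + e₂) 1) ?_ ?_ ?_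
  · rw [Submodule.mem_toAddSubgroup, momentCode, LinearMap.mem_ker]
    simp only [map_add, moments_pi_single, one_smul, smul_zero]
    refine Prod.ext ?_ ?_
    · simp only [Prod.fst_add, Prod.fst_zero]
      linear_combination 2 * h2
    · simp only [Prod.snd_add, Prod.snd_zero, zero_add]
      rw [← two_smul F, h2, zero_smul]
  · intro h
    have h0 := congrFun h e₁
    simp [h₁, h₁₂, h₂] at h0
  · refine (hammingNorm_le_card_of_support_subset (s := {0, e₁, e₂, e₁ + e₂}) fun v hv => ?_).trans
      card_le_four
    by_contra hmem
    simp only [mem_insert, mem_singleton, not_or] at hmem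
    simp [hmem.1, hmem.2.1, hmem.2.2.1, hmem.2.2.2] at hv

end MomentCode

/-- `RM_q(s-1,d)` has covering radius 2, minimum distance 4 if `q = 2`
and 3 if `q ≥ 3`, and its neighbour set coincides with that of `RM_q(s,d)`. -/
theorem stmt_16 (F : Type) [Field F] [Fintype F] [DecidableEq F] (d : ℕ) (hd : 1 ≤ d)
    (hdq : (d, Fintype.card F) ≠ (1, 2)) :
    IsGreatest {k : ℕ | ∃ β : (Fin d → F) → F, IsCodeDist (RMs1 F d) β k} 2 ∧
    (Fintype.card F = 2 → HasMinDist (RMs1 F d) 4) ∧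
    (3 ≤ Fintype.card F → HasMinDist (RMs1 F d) 3) ∧
    neighbourSet (RMs1 F d) = neighbourSet (RMs F d) := by
  have : Nonempty (Fin d) := ⟨⟨0, hd⟩⟩
  rw [RMs1_eq_momentCode]
  refine ⟨isGreatest_codeDist_momentCode, fun hF => ?_, fun hF => hasMinDist_momentCode_three hF,
    neighbourSet_momentCode⟩
  have hd2 : 2 ≤ d := by
    by_contra h
    exact hdq (by rw [hF, show d = 1 by omega])
  have h01 : (⟨0, hd⟩ : Fin d) ≠ ⟨1, hd2⟩ := by simp
  exact hasMinDist_momentCode_four hF (e₁ := Pi.single ⟨0, hd⟩ 1) (e₂ := Pi.single ⟨1, hd2⟩ 1)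
    (by simp) (by simp) (by simpa [Pi.single_eq_of_ne h01] using congrFun · ⟨0, hd⟩)
end

section
/- The Reed–Muller code RM_q(s−1,d) is an elusive code: there exists an automorphism of the Hamming graph H(q^d,q) that fixes the neighbour set RM_q(s−1,d)_1 setwise but does not fix RM_q(s−1,d) setwise. -/
variable {M Q : Type*}

/-!
The neighbour set of `RM_q(s-1,d)` is exactly the complement of `RM_q(s,d)`: a vertex `ν` with
`t = ∑ ν_v ≠ 0` becomes a codeword after subtracting `t` in the single entry `t⁻¹ ∑ ν_v v`, while a
codeword changed in one entry no longer has entry sum zero. Hence any translation by a word of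
`RM_q(s,d)` fixes the neighbour set, and translating by `e_0 - e_u` with `u ≠ 0` moves the zero
codeword out of `RM_q(s-1,d)`.
-/

variable [Fintype M]

lemma isAut_addRight [DecidableEq Q] [AddGroup Q] (β : M → Q) : IsAut (Equiv.addRight β) := by
  intro a b
  simp only [hammingDist, Equiv.coe_addRight, Pi.add_apply, ne_eq, add_left_inj]

lemma sum_ne_zero_of_hammingNorm_eq_one_s17 [DecidableEq Q] [AddCommMonoid Q] {x : M → Q}
    (hx : hammingNorm x = 1) : ∑ v, x v ≠ 0 := by
  obtain ⟨w, hw⟩ := Finset.card_eq_one.mp hx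
  have hsupp (v : M) : x v ≠ 0 ↔ v = w := by
    simpa using congrArg (v ∈ ·) hw
  rw [Finset.sum_eq_single w (fun v _ hv => not_not.mp ((hsupp v).not.mpr hv)) (by simp)]
  exact (hsupp w).mpr rfl

lemma hammingNorm_pi_single_s17 [DecidableEq M] [DecidableEq Q] [Zero Q] (w : M) {t : Q}
    (ht : t ≠ 0) : hammingNorm (Pi.single w t : M → Q) = 1 := by
  rw [hammingNorm, Finset.card_eq_one]
  refine ⟨w, Finset.ext fun v => ?_⟩
  by_cases hv : v = w
  · subst hv; simpa using ht
  · simp [hv]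

lemma sum_pi_single_smul_self {R V : Type*} [Semiring R] [AddCommMonoid V] [Module R V]
    [Fintype V] [DecidableEq V] (w : V) (t : R) : ∑ v, (Pi.single w t : V → R) v • v = t • w := by
  rw [Finset.sum_eq_single w (fun v _ hv => by rw [Pi.single_eq_of_ne hv, zero_smul]) (by simp),
    Pi.single_eq_same]

section ReedMuller

variable {F : Type*} [Field F] [Fintype F] {d : ℕ}

lemma RMs1_subset_RMs : RMs1 F d ⊆ RMs F d := fun _ h => h.1

lemma zero_mem_RMs1 : (0 : (Fin d → F) → F) ∈ RMs1 F d := by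
  simp [RMs1]

lemma sub_pi_single_mem_RMs1 [DecidableEq F] (ν : (Fin d → F) → F) (ht : ∑ v, ν v ≠ 0) :
    ν - Pi.single ((∑ v, ν v)⁻¹ • ∑ v, ν v • v) (∑ v, ν v) ∈ RMs1 F d := by
  refine ⟨?_, ?_⟩
  · simp only [Pi.sub_apply, Finset.sum_sub_distrib, Fintype.sum_pi_single', sub_self]
  · simp only [Pi.sub_apply, sub_smul, Finset.sum_sub_distrib, sum_pi_single_smul_self,
      smul_smul, mul_inv_cancel₀ ht, one_smul, sub_self]

lemma neighbourSet_RMs1 [DecidableEq F] : neighbourSet (RMs1 F d) = (RMs F d)ᶜ := by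
  ext ν
  constructor
  · rintro ⟨-, c, hc, hνc⟩ hν
    rw [hammingDist_eq_hammingNorm] at hνc
    apply sum_ne_zero_of_hammingNorm_eq_one_s17 hνc
    simpa [RMs, Finset.sum_add_distrib, hc.1] using hν
  · intro hν
    refine ⟨fun h => hν (RMs1_subset_RMs h), _, sub_pi_single_mem_RMs1 ν hν, ?_⟩
    rw [hammingDist_comm, hammingDist_eq_hammingNorm, neg_sub, sub_add_cancel]
    exact hammingNorm_pi_single_s17 _ hν

lemma image_addRight_compl_RMs {β : (Fin d → F) → F} (hβ : β ∈ RMs F d) :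
    Equiv.addRight β '' (RMs F d)ᶜ = (RMs F d)ᶜ := by
  ext ν
  rw [Equiv.image_eq_preimage_symm]
  simp_all [RMs, Finset.sum_add_distrib]

lemma exists_mem_RMs_notMem_RMs1 (hd : 1 ≤ d) : ∃ β, β ∈ RMs F d ∧ β ∉ RMs1 F d := by
  classical
  have : Nonempty (Fin d) := ⟨⟨0, hd⟩⟩
  obtain ⟨u, hu⟩ := exists_ne (0 : Fin d → F)
  refine ⟨Pi.single 0 1 - Pi.single u 1, ?_, fun h => hu ?_⟩
  · simp [RMs, Finset.sum_sub_distrib]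
  · simpa [Pi.sub_apply, sub_smul, Finset.sum_sub_distrib, sum_pi_single_smul_self] using h.2

end ReedMuller

theorem stmt_17_general (F : Type) [Field F] [Fintype F] [DecidableEq F] (d : ℕ) (hd : 1 ≤ d) :
    ∃ x : ((Fin d → F) → F) ≃ ((Fin d → F) → F), IsAut x ∧
      x '' neighbourSet (RMs1 F d) = neighbourSet (RMs1 F d) ∧
      x '' RMs1 F d ≠ RMs1 F d := by
  obtain ⟨β, hβ, hβ1⟩ := exists_mem_RMs_notMem_RMs1 (F := F) hd
  refine ⟨Equiv.addRight β, isAut_addRight β, ?_, fun h => hβ1 ?_⟩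
  · rw [neighbourSet_RMs1, image_addRight_compl_RMs hβ]
  · rw [← h]
    exact ⟨0, zero_mem_RMs1, zero_add β⟩

/-- `RM_q(s-1,d)` is elusive: some automorphism of `H(q^d,q)` fixes its
neighbour set setwise but does not fix the code setwise. -/
theorem stmt_17 (F : Type) [Field F] [Fintype F] [DecidableEq F] (d : ℕ) (hd : 1 ≤ d)
    (hdq : (d, Fintype.card F) ≠ (1, 2)) :
    ∃ x : ((Fin d → F) → F) ≃ ((Fin d → F) → F), IsAut x ∧
      x '' neighbourSet (RMs1 F d) = neighbourSet (RMs1 F d) ∧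
      x '' RMs1 F d ≠ RMs1 F d :=
  stmt_17_general F d hd
end
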